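/- arXiv:1810.00896 — 10 statements merged into one kernel-verified Lean document; each statement's English description precedes it below -/
import Mathlib

section
/- A point y : Fin m → ℝ belongs to the image F = Set.range f of the quadratic map if and only if there exists a symmetric matrix X : Matrix (Fin (n+1)) (Fin (n+1)) ℝ with X.PosSemidef, X.rank = 1, X (Fin.last n) (Fin.last n) = 1, and (H k * X).trace = y k for every k : Fin m. -/
/-!
A positive semidefinite matrix of rank one whose last diagonal entry is `1` is exactly `v vᵀ`
for a vector `v` with last coordinate `1`, i.e. the homogenization `v = (x, 1)` of a point `x`.
For such `X`, `tr (H k * X) = vᵀ (H k) v = xᵀ (A k) x + 2 (b k)ᵀ x = f x k`.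
-/

open Matrix

namespace Matrix

variable {m n K : Type*} [Fintype m] [Fintype n] [Field K]

theorem rank_pos_of_apply_ne_zero {A : Matrix m n K} {i : m} {j : n} (h : A i j ≠ 0) :
    0 < A.rank := by
  rw [rank_eq_finrank_span_cols, Module.finrank_pos_iff_exists_ne_zero]
  exact ⟨⟨A.col j, Submodule.subset_span ⟨j, rfl⟩⟩,
    fun h0 => h (congrFun (congrArg Subtype.val h0) i)⟩

theorem eq_vecMulVec_of_rank_le_one {A : Matrix m n K} (hA : A.rank ≤ 1) {i : m} {j : n}
    (hij : A i j = 1) : A = vecMulVec (A.col j) (A i) := by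
  have hcol : A.col j ≠ 0 := fun h => by simpa [hij] using congrFun h i
  have hspan : Submodule.span K (Set.range A.col) = K ∙ A.col j := by
    refine (Submodule.eq_of_le_of_finrank_le ((Submodule.span_singleton_le_iff_mem _ _).mpr
      (Submodule.subset_span (Set.mem_range_self j))) ?_).symm
    rwa [finrank_span_singleton hcol, ← rank_eq_finrank_span_cols]
  ext k l
  obtain ⟨c, hc⟩ : ∃ c : K, c • A.col j = A.col l :=
    Submodule.mem_span_singleton.mp (hspan ▸ Submodule.subset_span ⟨l, rfl⟩)
  have hci : c = A i l := by simpa [hij] using congrFun hc i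
  simpa [hci, vecMulVec_apply, mul_comm] using (congrFun hc k).symm

open scoped ComplexOrder in
theorem posSemidef_and_rank_eq_one_and_apply_eq_one_iff {𝕜 : Type*} [RCLike 𝕜]
    {X : Matrix n n 𝕜} (i : n) :
    X.PosSemidef ∧ X.rank = 1 ∧ X i i = 1 ↔
      ∃ v : n → 𝕜, v i = 1 ∧ X = vecMulVec v (star v) := by
  constructor
  · rintro ⟨hX, hrank, hii⟩
    have hrow : X i = star (X.col i) := funext fun l => (hX.isHermitian.apply i l).symm
    exact ⟨X.col i, hii, hrow ▸ eq_vecMulVec_of_rank_le_one hrank.le hii⟩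
  · rintro ⟨v, hvi, rfl⟩
    have hii : vecMulVec v (star v) i i = 1 := by simp [vecMulVec_apply, hvi]
    exact ⟨posSemidef_vecMulVec_self_star v,
      le_antisymm (rank_vecMulVec_le _ _) (rank_pos_of_apply_ne_zero (hii ▸ one_ne_zero)), hii⟩

end Matrix

theorem dotProduct_mulVec_reindex_fromBlocks_border {R : Type*} [CommRing R] {n : ℕ}
    (A : Matrix (Fin n) (Fin n) R) (b : Fin n → R) (v : Fin (n + 1) → R) :
    v ⬝ᵥ reindex finSumFinEquiv finSumFinEquiv
        (fromBlocks A (replicateCol (Fin 1) b) (replicateRow (Fin 1) b) 0) *ᵥ v =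
      Fin.init v ⬝ᵥ A *ᵥ Fin.init v + 2 * v (Fin.last n) * (b ⬝ᵥ Fin.init v) := by
  have hv : v ∘ finSumFinEquiv = Sum.elim (Fin.init v) (fun _ => v (Fin.last n)) := by
    ext (j | j)
    · rfl
    · rw [Fin.fin_one_eq_zero j]; rfl
  rw [reindex_apply, submatrix_mulVec_equiv, dotProduct_comp_equiv_symm, Equiv.symm_symm, hv,
    fromBlocks_mulVec, sumElim_dotProduct_sumElim]
  simp only [dotProduct, Sum.elim_comp_inl, Sum.elim_comp_inr, Pi.add_apply, mulVec,
    Finset.univ_unique, Fin.default_eq_zero, replicateCol_apply, Finset.sum_const,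
    Finset.card_singleton, one_smul, mul_add, Finset.mul_sum, Finset.sum_add_distrib, zero_mulVec,
    replicateRow_apply, Pi.zero_apply, add_zero]
  rw [add_assoc, ← Finset.sum_add_distrib]
  exact congrArg _ (Finset.sum_congr rfl fun i _ => by ring)

theorem image_eq_rank_one_sdp_general (n m : ℕ)
    (A : Fin m → Matrix (Fin n) (Fin n) ℝ)
    (b : Fin m → (Fin n → ℝ))
    (f : (Fin n → ℝ) → (Fin m → ℝ))
    (hf : ∀ x k, f x k = x ⬝ᵥ (A k).mulVec x + 2 * (b k ⬝ᵥ x))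
    (H : Fin m → Matrix (Fin (n + 1)) (Fin (n + 1)) ℝ)
    (hH : ∀ k, H k = Matrix.reindex finSumFinEquiv finSumFinEquiv
      (Matrix.fromBlocks (A k) (Matrix.replicateCol (Fin 1) (b k)) (Matrix.replicateRow (Fin 1) (b k)) 0))
    (y : Fin m → ℝ) :
    y ∈ Set.range f ↔
      ∃ X : Matrix (Fin (n + 1)) (Fin (n + 1)) ℝ,
        X.PosSemidef ∧ X.rank = 1 ∧ X (Fin.last n) (Fin.last n) = 1 ∧
        ∀ k, (H k * X).trace = y k := by
  have htrace : ∀ v : Fin (n + 1) → ℝ, v (Fin.last n) = 1 →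
      ∀ k, (H k * vecMulVec v v).trace = f (Fin.init v) k := by
    intro v hv k
    rw [mul_vecMulVec, trace_vecMulVec, dotProduct_comm, hH,
      dotProduct_mulVec_reindex_fromBlocks_border, hv, hf, mul_one]
  constructor
  · rintro ⟨x, rfl⟩
    have hv : (Fin.snoc x 1 : Fin (n + 1) → ℝ) (Fin.last n) = 1 := Fin.snoc_last _ _
    obtain ⟨hX, hrank, hlast⟩ := (posSemidef_and_rank_eq_one_and_apply_eq_one_iff _).mpr
      ⟨Fin.snoc x 1, hv, by rw [star_trivial]⟩
    exact ⟨_, hX, hrank, hlast, fun k => by simpa using htrace _ hv k⟩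
  · rintro ⟨X, hX, hrank, hlast, htr⟩
    obtain ⟨v, hv, rfl⟩ :=
      (posSemidef_and_rank_eq_one_and_apply_eq_one_iff _).mp ⟨hX, hrank, hlast⟩
    rw [star_trivial] at htr
    exact ⟨Fin.init v, funext fun k => (htrace v hv k).symm.trans (htr k)⟩

theorem image_eq_rank_one_sdp (n m : ℕ)
    (A : Fin m → Matrix (Fin n) (Fin n) ℝ) (hA : ∀ k, (A k)ᵀ = A k)
    (b : Fin m → (Fin n → ℝ))
    (f : (Fin n → ℝ) → (Fin m → ℝ))
    (hf : ∀ x k, f x k = x ⬝ᵥ (A k).mulVec x + 2 * (b k ⬝ᵥ x))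
    (H : Fin m → Matrix (Fin (n + 1)) (Fin (n + 1)) ℝ)
    (hH : ∀ k, H k = Matrix.reindex finSumFinEquiv finSumFinEquiv
      (Matrix.fromBlocks (A k) (Matrix.replicateCol (Fin 1) (b k)) (Matrix.replicateRow (Fin 1) (b k)) 0))
    (y : Fin m → ℝ) :
    y ∈ Set.range f ↔
      ∃ X : Matrix (Fin (n + 1)) (Fin (n + 1)) ℝ,
        X.PosSemidef ∧ X.rank = 1 ∧ X (Fin.last n) (Fin.last n) = 1 ∧
        ∀ k, (H k * X).trace = y k :=
  image_eq_rank_one_sdp_general n m A b f hf H hH y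
end

section
/- The convex hull of the image of the quadratic map equals the image of the semidefinite relaxation obtained by dropping the rank constraint: convexHull ℝ (Set.range f) = {y : Fin m → ℝ | ∃ X : Matrix (Fin (n+1)) (Fin (n+1)) ℝ, X.PosSemidef ∧ X (Fin.last n) (Fin.last n) = 1 ∧ ∀ k, (H k * X).trace = y k}. -/
/-!
The image lies in the relaxation through the rank-one lifts `(x, 1)(x, 1)ᵀ`, and the relaxation is
convex. Conversely, write a PSD matrix `X` with last diagonal entry `1` as `∑ᵢ wᵢ wᵢᵀ` and split
`wᵢ = (xᵢ, tᵢ)`, so that `∑ tᵢ² = 1` and `tr (Hₖ X) = ∑ᵢ (xᵢᵀ Aₖ xᵢ + 2 tᵢ bₖᵀ xᵢ)`. A summand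
with `tᵢ ≠ 0` equals `tᵢ² f (xᵢ / tᵢ)`, so these summands form a convex combination of points of
the image. A summand with `tᵢ = 0` is `(xᵢᵀ Aₖ xᵢ)ₖ`, and adding such a vector keeps a point in the
convex hull, because `f x + (uᵀ Aₖ u)ₖ` is the midpoint of `f (x + u)` and `f (x - u)`.
-/

open Matrix Set

lemma comp_finSumFinEquiv_eq_sumElim {α : Type*} {n : ℕ} (w : Fin (n + 1) → α) :
    w ∘ finSumFinEquiv = Sum.elim (Fin.init w) (fun _ : Fin 1 => w (Fin.last n)) := by
  ext (i | i)
  · rfl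
  · rw [Subsingleton.elim i 0]; rfl

section BorderedMatrix

variable {R : Type*} [CommSemiring R]

lemma sumElim_dotProduct_fromBlocks_mulVec {ι : Type*} [Fintype ι] (A : Matrix ι ι R)
    (b x : ι → R) (t : R) :
    Sum.elim x (fun _ : Fin 1 => t) ⬝ᵥ
        fromBlocks A (replicateCol (Fin 1) b) (replicateRow (Fin 1) b) 0 *ᵥ
          Sum.elim x (fun _ : Fin 1 => t) =
      x ⬝ᵥ A *ᵥ x + 2 * t * (b ⬝ᵥ x) := by
  have hcol : replicateCol (Fin 1) b *ᵥ (fun _ => t) = t • b := by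
    ext; simp [mulVec, dotProduct, mul_comm]
  have hrow : (fun _ : Fin 1 => t) ⬝ᵥ replicateRow (Fin 1) b *ᵥ x = t * (b ⬝ᵥ x) := by
    simp [dotProduct, replicateRow_mulVec_eq_const]
  simp only [fromBlocks_mulVec, sumElim_dotProduct_sumElim, Function.comp_def, Sum.elim_inl,
    Sum.elim_inr, dotProduct_add, hcol, hrow, zero_mulVec, add_zero, dotProduct_smul, smul_eq_mul,
    dotProduct_comm x b]
  ring

lemma dotProduct_reindex_fromBlocks_mulVec {n : ℕ} (A : Matrix (Fin n) (Fin n) R)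
    (b : Fin n → R) (w : Fin (n + 1) → R) :
    w ⬝ᵥ reindex finSumFinEquiv finSumFinEquiv
        (fromBlocks A (replicateCol (Fin 1) b) (replicateRow (Fin 1) b) 0) *ᵥ w =
      Fin.init w ⬝ᵥ A *ᵥ Fin.init w + 2 * w (Fin.last n) * (b ⬝ᵥ Fin.init w) := by
  rw [reindex_apply, submatrix_mulVec_equiv, Equiv.symm_symm, ← comp_equiv_symm_dotProduct,
    Equiv.symm_symm, comp_finSumFinEquiv_eq_sumElim, sumElim_dotProduct_fromBlocks_mulVec]

lemma trace_mul_vecMulVec {ι : Type*} [Fintype ι] (M : Matrix ι ι R) (v w : ι → R) :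
    (M * vecMulVec v w).trace = w ⬝ᵥ M *ᵥ v := by
  rw [mul_vecMulVec, trace_vecMulVec, dotProduct_comm]

end BorderedMatrix

lemma convex_setOf_exists_posSemidef_trace_mul_eq {ι κ : Type*} [Fintype ι]
    (H : κ → Matrix ι ι ℝ) (i₀ : ι) :
    Convex ℝ {y : κ → ℝ | ∃ X : Matrix ι ι ℝ,
      X.PosSemidef ∧ X i₀ i₀ = 1 ∧ ∀ k, (H k * X).trace = y k} := by
  rintro y₁ ⟨X₁, hX₁, hX₁₀, hy₁⟩ y₂ ⟨X₂, hX₂, hX₂₀, hy₂⟩ a c ha hc hac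
  refine ⟨a • X₁ + c • X₂, (hX₁.smul ha).add (hX₂.smul hc), ?_, fun k => ?_⟩
  · simp [hX₁₀, hX₂₀, hac]
  · simp [mul_add, trace_add, hy₁, hy₂]

section QuadraticMap

variable {ι κ : Type*} [Fintype ι] (A : κ → Matrix ι ι ℝ) (b : κ → ι → ℝ)

def quadMap (x : ι → ℝ) : κ → ℝ :=
  fun k => x ⬝ᵥ A k *ᵥ x + 2 * (b k ⬝ᵥ x)

def quadForms (u : ι → ℝ) : κ → ℝ :=
  fun k => u ⬝ᵥ A k *ᵥ u

def homogenization (x : ι → ℝ) (t : ℝ) : κ → ℝ :=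
  fun k => x ⬝ᵥ A k *ᵥ x + 2 * t * (b k ⬝ᵥ x)

variable {A b}

lemma homogenization_one (x : ι → ℝ) : homogenization A b x 1 = quadMap A b x := by
  ext k
  simp [homogenization, quadMap]

lemma homogenization_zero (x : ι → ℝ) : homogenization A b x 0 = quadForms A x := by
  ext k
  simp [homogenization, quadForms]

lemma homogenization_eq_sq_smul_quadMap (x : ι → ℝ) {t : ℝ} (ht : t ≠ 0) :
    homogenization A b x t = t ^ 2 • quadMap A b (t⁻¹ • x) := by
  ext k
  simp only [homogenization, quadMap, Pi.smul_apply, smul_dotProduct, mulVec_smul,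
    dotProduct_smul, smul_eq_mul]
  field_simp

lemma midpoint_quadMap_add_quadMap_sub (x u : ι → ℝ) :
    (1 / 2 : ℝ) • quadMap A b (x + u) + (1 / 2 : ℝ) • quadMap A b (x - u) =
      quadForms A u + quadMap A b x := by
  ext k
  simp only [quadMap, quadForms, Pi.add_apply, Pi.smul_apply, smul_eq_mul, mulVec_add,
    mulVec_sub, dotProduct_add, dotProduct_sub, add_dotProduct, sub_dotProduct]
  ring

lemma quadForms_add_mem_convexHull (u : ι → ℝ) {y : κ → ℝ}
    (hy : y ∈ convexHull ℝ (range (quadMap A b))) :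
    quadForms A u + y ∈ convexHull ℝ (range (quadMap A b)) := by
  refine convexHull_min ?_ ((convex_convexHull ℝ _).translate_preimage_right _) hy
  rintro _ ⟨x, rfl⟩
  rw [mem_preimage, ← midpoint_quadMap_add_quadMap_sub]
  exact convex_convexHull ℝ _ (subset_convexHull ℝ _ (mem_range_self _))
    (subset_convexHull ℝ _ (mem_range_self _)) (by norm_num) (by norm_num) (by norm_num)

lemma sum_quadForms_add_mem_convexHull {ρ : Type*} (s : Finset ρ) (u : ρ → ι → ℝ) {y : κ → ℝ}
    (hy : y ∈ convexHull ℝ (range (quadMap A b))) :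
    ∑ i ∈ s, quadForms A (u i) + y ∈ convexHull ℝ (range (quadMap A b)) := by
  induction s using Finset.cons_induction with
  | empty => simpa using hy
  | cons i s hi ih =>
    rw [Finset.sum_cons, add_assoc]
    exact quadForms_add_mem_convexHull _ ih

lemma sum_homogenization_mem_convexHull {ρ : Type*} [Fintype ρ] (x : ρ → ι → ℝ) (t : ρ → ℝ)
    (ht : ∑ i, t i ^ 2 = 1) :
    ∑ i, homogenization A b (x i) (t i) ∈ convexHull ℝ (range (quadMap A b)) := by
  classical
  have hweights : ∑ i with t i ≠ 0, t i ^ 2 = 1 := by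
    rw [Finset.sum_filter_of_ne fun i _ hi => by simpa using hi, ht]
  have hcomb : ∑ i with t i ≠ 0, t i ^ 2 • quadMap A b ((t i)⁻¹ • x i) ∈
      convexHull ℝ (range (quadMap A b)) :=
    (convex_convexHull ℝ _).sum_mem (fun _ _ => sq_nonneg _) hweights
      fun i _ => subset_convexHull ℝ _ (mem_range_self _)
  convert sum_quadForms_add_mem_convexHull {i | t i = 0} x hcomb using 1
  rw [← Finset.sum_filter_add_sum_filter_not Finset.univ (fun i => t i = 0)]
  congr 1
  · refine Finset.sum_congr rfl fun i hi => ?_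
    rw [(Finset.mem_filter.mp hi).2, homogenization_zero]
  · exact Finset.sum_congr rfl fun i hi =>
      homogenization_eq_sq_smul_quadMap _ (Finset.mem_filter.mp hi).2

end QuadraticMap

theorem convexHull_image_eq_sdp_relaxation_general (n m : ℕ)
    (A : Fin m → Matrix (Fin n) (Fin n) ℝ)
    (b : Fin m → (Fin n → ℝ))
    (f : (Fin n → ℝ) → (Fin m → ℝ))
    (hf : ∀ x k, f x k = x ⬝ᵥ (A k).mulVec x + 2 * (b k ⬝ᵥ x))
    (H : Fin m → Matrix (Fin (n + 1)) (Fin (n + 1)) ℝ)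
    (hH : ∀ k, H k = Matrix.reindex finSumFinEquiv finSumFinEquiv
      (Matrix.fromBlocks (A k) (Matrix.replicateCol (Fin 1) (b k)) (Matrix.replicateRow (Fin 1) (b k)) 0)) :
    convexHull ℝ (Set.range f) =
      {y : Fin m → ℝ | ∃ X : Matrix (Fin (n + 1)) (Fin (n + 1)) ℝ,
        X.PosSemidef ∧ X (Fin.last n) (Fin.last n) = 1 ∧ ∀ k, (H k * X).trace = y k} := by
  obtain rfl : f = quadMap A b := funext₂ hf
  have hH' (k : Fin m) (w : Fin (n + 1) → ℝ) :
      w ⬝ᵥ H k *ᵥ w = homogenization A b (Fin.init w) (w (Fin.last n)) k := by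
    rw [hH, dotProduct_reindex_fromBlocks_mulVec]; rfl
  refine subset_antisymm (convexHull_min ?_ (convex_setOf_exists_posSemidef_trace_mul_eq H _)) ?_
  · rintro _ ⟨x, rfl⟩
    let w : Fin (n + 1) → ℝ := Fin.snoc x 1
    have hw : (vecMulVec w w).PosSemidef := by simpa using posSemidef_vecMulVec_self_star w
    refine ⟨vecMulVec w w, hw, by simp [w, vecMulVec_apply], fun k => ?_⟩
    rw [trace_mul_vecMulVec, hH']
    simp [w, homogenization_one]
  · rintro y ⟨X, hX, hX₀, hy⟩
    obtain ⟨r, w, rfl⟩ := posSemidef_iff_eq_sum_vecMulVec.mp hX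
    convert sum_homogenization_mem_convexHull (fun i => Fin.init (w i))
      (fun i => w i (Fin.last n)) ?_ using 1
    · ext k
      simp [← hy, Finset.mul_sum, trace_sum, trace_mul_vecMulVec, hH']
    · simpa [sq, Matrix.sum_apply, vecMulVec_apply] using hX₀

theorem convexHull_image_eq_sdp_relaxation (n m : ℕ)
    (A : Fin m → Matrix (Fin n) (Fin n) ℝ) (hA : ∀ k, (A k)ᵀ = A k)
    (b : Fin m → (Fin n → ℝ))
    (f : (Fin n → ℝ) → (Fin m → ℝ))
    (hf : ∀ x k, f x k = x ⬝ᵥ (A k).mulVec x + 2 * (b k ⬝ᵥ x))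
    (H : Fin m → Matrix (Fin (n + 1)) (Fin (n + 1)) ℝ)
    (hH : ∀ k, H k = Matrix.reindex finSumFinEquiv finSumFinEquiv
      (Matrix.fromBlocks (A k) (Matrix.replicateCol (Fin 1) (b k)) (Matrix.replicateRow (Fin 1) (b k)) 0)) :
    convexHull ℝ (Set.range f) =
      {y : Fin m → ℝ | ∃ X : Matrix (Fin (n + 1)) (Fin (n + 1)) ℝ,
        X.PosSemidef ∧ X (Fin.last n) (Fin.last n) = 1 ∧ ∀ k, (H k * X).trace = y k} :=
  convexHull_image_eq_sdp_relaxation_general n m A b f hf H hH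
end

section
/- (Sufficient condition of infeasibility.) Let y⁰ : Fin m → ℝ. If there exists c : Fin m → ℝ such that the bordered matrix H(c) := Matrix.fromBlocks (c·A) (Matrix.col (c·b)) (Matrix.row (c·b)) (Matrix.of (fun _ _ => -(c ⬝ᵥ y⁰))) : Matrix (Fin (n+1)) (Fin (n+1)) ℝ is positive definite, then y⁰ ∉ convexHull ℝ (Set.range f); in particular y⁰ ∉ Set.range f. -/
/-!
Evaluating the quadratic form of the bordered matrix `H(c)` at `(x, 1)` gives
`c ⬝ᵥ f x - c ⬝ᵥ y₀`, so positive definiteness of `H(c)` puts all of `range f` in the open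
half-space `{y | c ⬝ᵥ y₀ < c ⬝ᵥ y}`. That half-space is convex and misses `y₀`, hence so does
the convex hull of `range f`.
-/

open Matrix

namespace Matrix

variable {ι κ R : Type*} [Fintype ι] [Fintype κ]

theorem sumElim_one_dotProduct_fromBlocks_mulVec [CommRing R] (M : Matrix ι ι R) (v : ι → R)
    (d : R) (x : ι → R) :
    Sum.elim x 1 ⬝ᵥ (fromBlocks M (replicateCol (Fin 1) v) (replicateRow (Fin 1) v)
      (of fun _ _ => d) *ᵥ Sum.elim x 1) = x ⬝ᵥ (M *ᵥ x) + 2 * (v ⬝ᵥ x) + d := by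
  rw [fromBlocks_mulVec, sumElim_dotProduct_sumElim]
  simp only [dotProduct, mulVec, Pi.add_apply, Sum.elim_comp_inl, Sum.elim_comp_inr,
    replicateCol_apply, replicateRow_apply, of_apply, Pi.one_apply, Fin.sum_univ_one, mul_one,
    mul_add, mul_comm, Finset.sum_add_distrib]
  ring

theorem neg_lt_of_posDef_fromBlocks [CommRing R] [PartialOrder R] [StarRing R] [TrivialStar R]
    [IsOrderedRing R] [Nontrivial R] {M : Matrix ι ι R} {v : ι → R} {d : R}
    (hH : (fromBlocks M (replicateCol (Fin 1) v) (replicateRow (Fin 1) v)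
      (of fun _ _ => d)).PosDef) (x : ι → R) :
    -d < x ⬝ᵥ (M *ᵥ x) + 2 * (v ⬝ᵥ x) := by
  have hne : (Sum.elim x 1 : ι ⊕ Fin 1 → R) ≠ 0 := fun h0 => by
    simpa using congrFun h0 (Sum.inr 0)
  have hpos := hH.dotProduct_mulVec_pos hne
  rw [star_trivial, sumElim_one_dotProduct_fromBlocks_mulVec] at hpos
  exact neg_lt_iff_pos_add.mpr hpos

theorem dotProduct_quadraticMap [CommRing R] (c : κ → R) (A : κ → Matrix ι ι R) (b : κ → ι → R)
    (x : ι → R) :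
    c ⬝ᵥ (fun k => x ⬝ᵥ (A k *ᵥ x) + 2 * (b k ⬝ᵥ x)) =
      x ⬝ᵥ ((∑ k, c k • A k) *ᵥ x) + 2 * ((∑ k, c k • b k) ⬝ᵥ x) := by
  simp only [sum_mulVec, dotProduct_sum, sum_dotProduct, smul_mulVec, dotProduct_smul,
    smul_dotProduct, smul_eq_mul, Finset.mul_sum, ← Finset.sum_add_distrib]
  simp only [dotProduct, mul_add]
  exact Finset.sum_congr rfl fun k _ => by ring

end Matrix

theorem notMem_convexHull_of_forall_lt {𝕜 E β : Type*} [Semiring 𝕜] [PartialOrder 𝕜]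
    [AddCommMonoid E] [Module 𝕜 E] [AddCommMonoid β] [PartialOrder β]
    [IsOrderedCancelAddMonoid β] [Module 𝕜 β] [PosSMulStrictMono 𝕜 β]
    (l : E →ₗ[𝕜] β) {s : Set E} {y : E} (h : ∀ z ∈ s, l y < l z) :
    y ∉ convexHull 𝕜 s := fun hy =>
  lt_irrefl (l y) (convexHull_min h (convex_halfSpace_gt l.isLinear (l y)) hy)

theorem infeasibility_certificate_general (n m : ℕ)
    (A : Fin m → Matrix (Fin n) (Fin n) ℝ)
    (b : Fin m → (Fin n → ℝ))
    (f : (Fin n → ℝ) → (Fin m → ℝ))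
    (hf : ∀ x k, f x k = x ⬝ᵥ (A k).mulVec x + 2 * (b k ⬝ᵥ x))
    (y₀ : Fin m → ℝ)
    (h : ∃ c : Fin m → ℝ,
      (Matrix.reindex finSumFinEquiv finSumFinEquiv
        (Matrix.fromBlocks (∑ k, c k • A k)
          (Matrix.replicateCol (Fin 1) (∑ k, c k • b k))
          (Matrix.replicateRow (Fin 1) (∑ k, c k • b k))
          (Matrix.of fun _ _ => -(c ⬝ᵥ y₀))) :
        Matrix (Fin (n + 1)) (Fin (n + 1)) ℝ).PosDef) :
    y₀ ∉ convexHull ℝ (Set.range f) ∧ y₀ ∉ Set.range f := by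
  obtain ⟨c, hc⟩ := h
  have hH := hc.submatrix finSumFinEquiv.injective
  rw [reindex_apply, submatrix_submatrix, Equiv.symm_comp_self, submatrix_id_id] at hH
  have hsep : ∀ y ∈ Set.range f, dotProductBilin ℝ ℝ c y₀ < dotProductBilin ℝ ℝ c y := by
    rintro _ ⟨x, rfl⟩
    change c ⬝ᵥ y₀ < c ⬝ᵥ f x
    rw [show f x = _ from funext (hf x), dotProduct_quadraticMap]
    simpa only [neg_neg] using neg_lt_of_posDef_fromBlocks hH x
  have hhull := notMem_convexHull_of_forall_lt _ hsep
  exact ⟨hhull, fun hy => hhull (subset_convexHull ℝ _ hy)⟩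

theorem infeasibility_certificate (n m : ℕ)
    (A : Fin m → Matrix (Fin n) (Fin n) ℝ) (hA : ∀ k, (A k)ᵀ = A k)
    (b : Fin m → (Fin n → ℝ))
    (f : (Fin n → ℝ) → (Fin m → ℝ))
    (hf : ∀ x k, f x k = x ⬝ᵥ (A k).mulVec x + 2 * (b k ⬝ᵥ x))
    (y₀ : Fin m → ℝ)
    (h : ∃ c : Fin m → ℝ,
      (Matrix.reindex finSumFinEquiv finSumFinEquiv
        (Matrix.fromBlocks (∑ k, c k • A k)
          (Matrix.replicateCol (Fin 1) (∑ k, c k • b k))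
          (Matrix.replicateRow (Fin 1) (∑ k, c k • b k))
          (Matrix.of fun _ _ => -(c ⬝ᵥ y₀))) :
        Matrix (Fin (n + 1)) (Fin (n + 1)) ℝ).PosDef) :
    y₀ ∉ convexHull ℝ (Set.range f) ∧ y₀ ∉ Set.range f :=
  infeasibility_certificate_general n m A b f hf y₀ h
end

section
/- If (c·A).PosDef, then the function x ↦ c ⬝ᵥ f x on Fin n → ℝ attains its global minimum value -((c·b) ⬝ᵥ (c·A)⁻¹.mulVec (c·b)) at the point x* := -((c·A)⁻¹.mulVec (c·b)), and x* is the unique global minimizer; consequently the set ∂F_c of minimizers of y ↦ c ⬝ᵥ y over F consists of exactly one point, namely f x*. -/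
/-!
With `M = c·A` and `β = c·b`, the functional `x ↦ c ⬝ᵥ f x` is the quadratic
`x ⬝ᵥ M x + 2 β ⬝ᵥ x`. Completing the square around `x* = -M⁻¹β` rewrites it as
`(x - x*) ⬝ᵥ M (x - x*) - β ⬝ᵥ M⁻¹β`, and positive definiteness of `M` makes the first term
positive away from `x*`. So `x*` is the strict global minimizer, and `f x*` is the only point of
`F` where `c ⬝ᵥ ·` is minimal.
-/

open Matrix

namespace Matrix

variable {ι n R : Type*} [Fintype ι] [Fintype n]

theorem sum_mul_quadratic [CommRing R] (c : ι → R) (A : ι → Matrix n n R) (b : ι → n → R)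
    (x : n → R) :
    ∑ k, c k * (x ⬝ᵥ A k *ᵥ x + 2 * (b k ⬝ᵥ x)) =
      x ⬝ᵥ (∑ k, c k • A k) *ᵥ x + 2 * ((∑ k, c k • b k) ⬝ᵥ x) := by
  simp only [sum_mulVec, dotProduct_sum, sum_dotProduct, smul_mulVec, dotProduct_smul,
    smul_dotProduct, smul_eq_mul, Finset.mul_sum, mul_add, Finset.sum_add_distrib, mul_left_comm]

theorem IsSymm.quadratic_eq_sub [CommRing R] [DecidableEq n] {M : Matrix n n R} (hM : M.IsSymm)
    (hdet : IsUnit M.det) (β x : n → R) :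
    x ⬝ᵥ M *ᵥ x + 2 * (β ⬝ᵥ x) =
      (x + M⁻¹ *ᵥ β) ⬝ᵥ M *ᵥ (x + M⁻¹ *ᵥ β) - β ⬝ᵥ M⁻¹ *ᵥ β := by
  have hMy : M *ᵥ (M⁻¹ *ᵥ β) = β := by rw [mulVec_mulVec, mul_nonsing_inv _ hdet, one_mulVec]
  have hyM : M⁻¹ *ᵥ β ⬝ᵥ M *ᵥ x = β ⬝ᵥ x := by
    rw [dotProduct_mulVec, ← mulVec_transpose, hM.eq, hMy]
  rw [mulVec_add, add_dotProduct, dotProduct_add, dotProduct_add, hMy, hyM, dotProduct_comm x β,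
    dotProduct_comm _ β]
  ring

variable {K : Type*} [Field K] [PartialOrder K] [StarRing K] [TrivialStar K] [DecidableEq n]

theorem PosDef.quadratic_eq_sub {M : Matrix n n K} (hM : M.PosDef) (β x : n → K) :
    x ⬝ᵥ M *ᵥ x + 2 * (β ⬝ᵥ x) =
      (x + M⁻¹ *ᵥ β) ⬝ᵥ M *ᵥ (x + M⁻¹ *ᵥ β) - β ⬝ᵥ M⁻¹ *ᵥ β :=
  (isHermitian_iff_isSymm.mp hM.isHermitian).quadratic_eq_sub
    ((isUnit_iff_isUnit_det M).mp hM.isUnit) β x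

theorem PosDef.quadratic_neg_inv_mulVec {M : Matrix n n K} (hM : M.PosDef) (β : n → K) :
    -(M⁻¹ *ᵥ β) ⬝ᵥ M *ᵥ -(M⁻¹ *ᵥ β) + 2 * (β ⬝ᵥ -(M⁻¹ *ᵥ β)) = -(β ⬝ᵥ M⁻¹ *ᵥ β) := by
  rw [hM.quadratic_eq_sub]
  simp

theorem PosDef.quadratic_lt_of_ne [IsOrderedAddMonoid K] {M : Matrix n n K} (hM : M.PosDef)
    (β : n → K) {x : n → K} (hx : x ≠ -(M⁻¹ *ᵥ β)) :
    -(β ⬝ᵥ M⁻¹ *ᵥ β) < x ⬝ᵥ M *ᵥ x + 2 * (β ⬝ᵥ x) := by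
  have hpos := hM.dotProduct_mulVec_pos (x := x + M⁻¹ *ᵥ β) (by rwa [← sub_neg_eq_add, sub_ne_zero])
  rw [star_trivial] at hpos
  rw [hM.quadratic_eq_sub, ← zero_sub]
  exact sub_lt_sub_right hpos _

end Matrix

theorem Set.sep_range_forall_le_eq_singleton {X Y α : Type*} [LinearOrder α] {f : X → Y}
    {φ : Y → α} {x₀ : X} (hlt : ∀ x ≠ x₀, φ (f x₀) < φ (f x)) :
    {y ∈ Set.range f | ∀ y' ∈ Set.range f, φ y ≤ φ y'} = {f x₀} := by
  ext y
  constructor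
  · rintro ⟨⟨x, rfl⟩, hx⟩
    by_contra hne
    exact (hx (f x₀) ⟨x₀, rfl⟩).not_gt (hlt x (mt (congrArg f) hne))
  · rintro rfl
    refine ⟨⟨x₀, rfl⟩, ?_⟩
    rintro _ ⟨x, rfl⟩
    rcases eq_or_ne x x₀ with rfl | hne
    exacts [le_rfl, (hlt x hne).le]

theorem posdef_direction_unique_minimizer_general (n m : ℕ)
    (A : Fin m → Matrix (Fin n) (Fin n) ℝ)
    (b : Fin m → (Fin n → ℝ))
    (f : (Fin n → ℝ) → (Fin m → ℝ))
    (hf : ∀ x k, f x k = x ⬝ᵥ (A k).mulVec x + 2 * (b k ⬝ᵥ x))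
    (c : Fin m → ℝ) (hpos : (∑ k, c k • A k).PosDef)
    (xstar : Fin n → ℝ)
    (hxstar : xstar = -((∑ k, c k • A k)⁻¹.mulVec (∑ k, c k • b k))) :
    (∀ x : Fin n → ℝ, c ⬝ᵥ f xstar ≤ c ⬝ᵥ f x) ∧
    c ⬝ᵥ f xstar = -((∑ k, c k • b k) ⬝ᵥ (∑ k, c k • A k)⁻¹.mulVec (∑ k, c k • b k)) ∧
    (∀ x : Fin n → ℝ, (∀ x' : Fin n → ℝ, c ⬝ᵥ f x ≤ c ⬝ᵥ f x') → x = xstar) ∧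
    {y ∈ Set.range f | ∀ y' ∈ Set.range f, c ⬝ᵥ y ≤ c ⬝ᵥ y'} = {f xstar} := by
  have hq (x : Fin n → ℝ) :
      c ⬝ᵥ f x = x ⬝ᵥ (∑ k, c k • A k) *ᵥ x + 2 * ((∑ k, c k • b k) ⬝ᵥ x) := by
    show ∑ k, c k * f x k = _
    simp only [hf, sum_mul_quadratic]
  have hval : c ⬝ᵥ f xstar = -((∑ k, c k • b k) ⬝ᵥ (∑ k, c k • A k)⁻¹ *ᵥ (∑ k, c k • b k)) := by
    rw [hq, hxstar, hpos.quadratic_neg_inv_mulVec]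
  have hlt (x : Fin n → ℝ) (hx : x ≠ xstar) : c ⬝ᵥ f xstar < c ⬝ᵥ f x := by
    rw [hval, hq]
    exact hpos.quadratic_lt_of_ne _ (hxstar ▸ hx)
  refine ⟨fun x => ?_, hval, fun x hx => ?_, Set.sep_range_forall_le_eq_singleton hlt⟩
  · rcases eq_or_ne x xstar with rfl | hne
    exacts [le_rfl, (hlt x hne).le]
  · by_contra hne
    exact (hx xstar).not_gt (hlt x hne)

theorem posdef_direction_unique_minimizer (n m : ℕ)
    (A : Fin m → Matrix (Fin n) (Fin n) ℝ) (hA : ∀ k, (A k)ᵀ = A k)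
    (b : Fin m → (Fin n → ℝ))
    (f : (Fin n → ℝ) → (Fin m → ℝ))
    (hf : ∀ x k, f x k = x ⬝ᵥ (A k).mulVec x + 2 * (b k ⬝ᵥ x))
    (c : Fin m → ℝ) (hpos : (∑ k, c k • A k).PosDef)
    (xstar : Fin n → ℝ)
    (hxstar : xstar = -((∑ k, c k • A k)⁻¹.mulVec (∑ k, c k • b k))) :
    (∀ x : Fin n → ℝ, c ⬝ᵥ f xstar ≤ c ⬝ᵥ f x) ∧
    c ⬝ᵥ f xstar = -((∑ k, c k • b k) ⬝ᵥ (∑ k, c k • A k)⁻¹.mulVec (∑ k, c k • b k)) ∧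
    (∀ x : Fin n → ℝ, (∀ x' : Fin n → ℝ, c ⬝ᵥ f x ≤ c ⬝ᵥ f x') → x = xstar) ∧
    {y ∈ Set.range f | ∀ y' ∈ Set.range f, c ⬝ᵥ y ≤ c ⬝ᵥ y'} = {f xstar} :=
  posdef_direction_unique_minimizer_general n m A b f hf c hpos xstar hxstar
end

section
/- Let Q : Matrix (Fin n) (Fin n) ℝ be symmetric and β : Fin n → ℝ, and set g x := x ⬝ᵥ Q.mulVec x + 2 * (β ⬝ᵥ x). Then g is bounded below (BddBelow (Set.range g)) if and only if Q.PosSemidef and β lies in the range of Q.mulVec. In particular, if Q has a direction of negative curvature (some x with x ⬝ᵥ Q.mulVec x < 0), or if Q is positive semidefinite but the equation Q.mulVec x = -β has no solution, then g is unbounded below. -/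
/-!
Along a line `t ↦ t • x` the function `g` is the scalar quadratic `(x ⬝ᵥ Q x) t² + 2 (β ⬝ᵥ x) t`,
so a lower bound on `g` forces `x ⬝ᵥ Q x ≥ 0` for every `x`, and `β ⬝ᵥ v = 0` for every
`v ∈ ker Q`. By the Fredholm alternative `range Q = (ker Qᵀ)ᗮ = (ker Q)ᗮ`, the latter says
`β ∈ range Q`. Conversely, if `Q y = β` then completing the square gives
`g x = (x + y) ⬝ᵥ Q (x + y) - y ⬝ᵥ Q y ≥ - y ⬝ᵥ Q y`.
-/

open Matrix

open Filter in
theorem not_bddBelow_range_mul_sq_add_mul {K : Type*} [Field K] [LinearOrder K]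
    [IsStrictOrderedRing K] {a b : K} (ha : a < 0) :
    ¬BddBelow (Set.range fun t : K => a * t ^ 2 + b * t) := by
  have : Tendsto (fun t : K => (a * t + b) * t) atTop atBot :=
    (tendsto_atBot_add_const_right _ b (tendsto_id.const_mul_atTop_of_neg ha)).atBot_mul_atTop₀
      tendsto_id
  refine not_bddBelow_of_tendsto_atBot (this.congr fun t => ?_)
  ring

theorem not_bddBelow_range_mul {K : Type*} [Field K] [LinearOrder K]
    [IsStrictOrderedRing K] {b : K} (hb : b ≠ 0) :
    ¬BddBelow (Set.range fun t : K => b * t) := by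
  rw [(mul_left_surjective₀ hb).range_eq]
  exact not_bddBelow_univ

theorem Matrix.exists_vecMul_eq_zero_dotProduct_ne_zero {K m n : Type*} [Field K] [Fintype m]
    [Fintype n] [DecidableEq m] {A : Matrix m n K} {b : m → K} (hb : b ∉ Set.range A.mulVec) :
    ∃ v, v ᵥ* A = 0 ∧ v ⬝ᵥ b ≠ 0 := by
  have hb' : b ∉ LinearMap.range A.mulVecLin := hb
  obtain ⟨f, hfb, hf⟩ := Submodule.exists_dual_map_eq_bot_of_notMem hb' inferInstance
  obtain ⟨v, rfl⟩ := (dotProductEquiv K m).surjective f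
  refine ⟨v, dotProduct_eq_zero _ fun x => ?_, hfb⟩
  rw [← dotProduct_mulVec]
  have := Submodule.mem_map_of_mem (f := dotProductEquiv K m v)
    (LinearMap.mem_range_self A.mulVecLin x)
  rwa [hf, Submodule.mem_bot] at this

def quadraticFun {ι : Type*} [Fintype ι] (Q : Matrix ι ι ℝ) (β : ι → ℝ) (x : ι → ℝ) : ℝ :=
  x ⬝ᵥ Q *ᵥ x + 2 * (β ⬝ᵥ x)

namespace quadraticFun

variable {ι : Type*} [Fintype ι] {Q : Matrix ι ι ℝ} {β : ι → ℝ}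

theorem smul (t : ℝ) (x : ι → ℝ) :
    quadraticFun Q β (t • x) = (x ⬝ᵥ Q *ᵥ x) * t ^ 2 + 2 * (β ⬝ᵥ x) * t := by
  simp only [quadraticFun, mulVec_smul, dotProduct_smul, smul_dotProduct, smul_eq_mul]
  ring

theorem eq_sub_of_mulVec_eq (hQ : Q.IsSymm) {y : ι → ℝ} (hy : Q *ᵥ y = β) (x : ι → ℝ) :
    quadraticFun Q β x = (x + y) ⬝ᵥ Q *ᵥ (x + y) - y ⬝ᵥ Q *ᵥ y := by
  have hyx : y ⬝ᵥ Q *ᵥ x = β ⬝ᵥ x := by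
    rw [dotProduct_mulVec, ← mulVec_transpose, hQ.eq, hy]
  have hxy : x ⬝ᵥ Q *ᵥ y = β ⬝ᵥ x := by rw [hy, dotProduct_comm]
  simp only [quadraticFun, mulVec_add, dotProduct_add, add_dotProduct, hyx, hxy]
  ring

theorem bddBelow_range_of_posSemidef (hQ : Q.PosSemidef) (hβ : β ∈ Set.range Q.mulVec) :
    BddBelow (Set.range (quadraticFun Q β)) := by
  obtain ⟨y, hy⟩ := hβ
  have hQ' : Q.IsSymm := isHermitian_iff_isSymm.1 hQ.isHermitian
  refine ⟨-(y ⬝ᵥ Q *ᵥ y), ?_⟩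
  rintro _ ⟨x, rfl⟩
  have := hQ.dotProduct_mulVec_nonneg (x + y)
  rw [star_trivial] at this
  rw [eq_sub_of_mulVec_eq hQ' hy]
  linarith

theorem bddBelow_range_smul (h : BddBelow (Set.range (quadraticFun Q β))) (x : ι → ℝ) :
    BddBelow (Set.range fun t : ℝ => (x ⬝ᵥ Q *ᵥ x) * t ^ 2 + 2 * (β ⬝ᵥ x) * t) := by
  refine h.mono ?_
  rintro _ ⟨t, rfl⟩
  exact ⟨t • x, smul t x⟩

theorem dotProduct_mulVec_nonneg_of_bddBelow (h : BddBelow (Set.range (quadraticFun Q β)))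
    (x : ι → ℝ) : 0 ≤ x ⬝ᵥ Q *ᵥ x :=
  not_lt.1 fun hx => not_bddBelow_range_mul_sq_add_mul hx (bddBelow_range_smul h x)

theorem posSemidef_of_bddBelow (hQ : Q.IsSymm) (h : BddBelow (Set.range (quadraticFun Q β))) :
    Q.PosSemidef :=
  .of_dotProduct_mulVec_nonneg (isHermitian_iff_isSymm.2 hQ) fun x => by
    simpa using dotProduct_mulVec_nonneg_of_bddBelow h x

theorem mem_range_mulVec_of_bddBelow [DecidableEq ι] (hQ : Q.IsSymm)
    (h : BddBelow (Set.range (quadraticFun Q β))) : β ∈ Set.range Q.mulVec := by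
  by_contra hβ
  obtain ⟨v, hv, hvβ⟩ := exists_vecMul_eq_zero_dotProduct_ne_zero hβ
  have hQv : Q *ᵥ v = 0 := by rw [← hQ.eq, mulVec_transpose, hv]
  have := bddBelow_range_smul h v
  simp only [hQv, dotProduct_zero, zero_mul, zero_add] at this
  exact not_bddBelow_range_mul (mul_ne_zero two_ne_zero (dotProduct_comm v β ▸ hvβ)) this

end quadraticFun

open quadraticFun in
theorem quadratic_bddBelow_iff (n : ℕ)
    (Q : Matrix (Fin n) (Fin n) ℝ) (hQsymm : Qᵀ = Q)
    (β : Fin n → ℝ)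
    (g : (Fin n → ℝ) → ℝ)
    (hg : ∀ x, g x = x ⬝ᵥ Q.mulVec x + 2 * (β ⬝ᵥ x)) :
    (BddBelow (Set.range g) ↔ Q.PosSemidef ∧ β ∈ Set.range Q.mulVec) ∧
    ((∃ x : Fin n → ℝ, x ⬝ᵥ Q.mulVec x < 0) → ¬ BddBelow (Set.range g)) ∧
    ((Q.PosSemidef ∧ ¬ ∃ x : Fin n → ℝ, Q.mulVec x = -β) → ¬ BddBelow (Set.range g)) := by
  obtain rfl : g = quadraticFun Q β := funext hg
  refine ⟨⟨fun h => ⟨posSemidef_of_bddBelow hQsymm h, mem_range_mulVec_of_bddBelow hQsymm h⟩,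
    fun ⟨hQ, hβ⟩ => bddBelow_range_of_posSemidef hQ hβ⟩, ?_, ?_⟩
  · rintro ⟨x, hx⟩ h
    exact hx.not_ge (dotProduct_mulVec_nonneg_of_bddBelow h x)
  · rintro ⟨-, hno⟩ h
    obtain ⟨y, hy⟩ := mem_range_mulVec_of_bddBelow hQsymm h
    exact hno ⟨-y, by rw [mulVec_neg, hy]⟩
end

section
/- (Non-convexity of a parabolic surface, underlying the complex case.) If y₀, v₁, v₂, u : Fin m → ℝ and v₁, v₂, u are linearly independent over ℝ (LinearIndependent ℝ ![v₁, v₂, u]), then the set {y₀ + (2*a) • v₁ + (2*b) • v₂ + (a^2 + b^2) • u | a b : ℝ} ⊆ (Fin m → ℝ) is not convex. -/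
theorem parabolic_surface_not_convex (m : ℕ) (y₀ v₁ v₂ u : Fin m → ℝ)
    (hindep : LinearIndependent ℝ ![v₁, v₂, u]) :
    ¬ Convex ℝ {y : Fin m → ℝ |
      ∃ a b : ℝ, y = y₀ + (2 * a) • v₁ + (2 * b) • v₂ + (a ^ 2 + b ^ 2) • u} := by
  intro hconv
  have h1 : y₀ + (2 * (1:ℝ)) • v₁ + (2 * (0:ℝ)) • v₂ + ((1:ℝ) ^ 2 + (0:ℝ) ^ 2) • u ∈
      {y : Fin m → ℝ | ∃ a b : ℝ, y = y₀ + (2 * a) • v₁ + (2 * b) • v₂ + (a ^ 2 + b ^ 2) • u} :=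
    ⟨1, 0, rfl⟩
  have h2 : y₀ + (2 * (-1:ℝ)) • v₁ + (2 * (0:ℝ)) • v₂ + ((-1:ℝ) ^ 2 + (0:ℝ) ^ 2) • u ∈
      {y : Fin m → ℝ | ∃ a b : ℝ, y = y₀ + (2 * a) • v₁ + (2 * b) • v₂ + (a ^ 2 + b ^ 2) • u} :=
    ⟨-1, 0, rfl⟩
  have hmid := hconv h1 h2 (by norm_num : (0:ℝ) ≤ 1/2) (by norm_num : (0:ℝ) ≤ 1/2) (by norm_num)
  obtain ⟨a, b, hab⟩ := hmid
  have key : y₀ + u = y₀ + (2 * a) • v₁ + (2 * b) • v₂ + (a ^ 2 + b ^ 2) • u := by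
    rw [← hab]
    funext i
    simp only [Pi.add_apply, Pi.smul_apply, smul_eq_mul]
    ring
  have hz : (2 * a) • v₁ + (2 * b) • v₂ + (a ^ 2 + b ^ 2 - 1) • u = 0 := by
    funext i
    have := congrFun key i
    simp only [Pi.add_apply, Pi.smul_apply, Pi.zero_apply, smul_eq_mul] at this ⊢
    linarith
  have hli := Fintype.linearIndependent_iff.mp hindep ![2 * a, 2 * b, a ^ 2 + b ^ 2 - 1]
  have hsum : ∑ i, (![2 * a, 2 * b, a ^ 2 + b ^ 2 - 1]) i • (![v₁, v₂, u]) i = 0 := by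
    simp [Fin.sum_univ_three, hz]
  have h0 := hli hsum 0
  have h1' := hli hsum 1
  have h2' := hli hsum 2
  simp at h0 h1' h2'
  nlinarith [h2', h0, h1']
end

section
/- (Sufficient condition for non-convexity of ∂F_c, homogeneous real case.) Assume m ≥ 3, n ≥ 2, b k = 0 for all k, and let c : Fin m → ℝ be such that (c·A).PosSemidef and the kernel of c·A is exactly two-dimensional: there are linearly independent x₀, x₁ with (c·A).mulVec x₀ = 0, (c·A).mulVec x₁ = 0, and every x with (c·A).mulVec x = 0 is a linear combination of x₀ and x₁. Define u k := x₀ ⬝ᵥ (A k).mulVec x₀, v k := x₁ ⬝ᵥ (A k).mulVec x₁, w k := x₀ ⬝ᵥ (A k).mulVec x₁, and assume u, v, w are linearly independent over ℝ. Then ∂F_c = f '' {x | (c·A).mulVec x = 0}, and this set is not convex. -/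
/-!
Since `c ⬝ᵥ f x = xᵀ (c·A) x` and `c·A` is positive semidefinite, the minimum of `c` on the
image is `0`, attained exactly on `ker (c·A)`. On the kernel, spanned by `x₀` and `x₁`,
`f (s x₀ + t x₁) = s² u + t² v + 2st w`; the midpoint of `u = f x₀` and `v = f x₁` would need
`s² = t² = 1/2` and `st = 0`, which is impossible.
-/

open Matrix

section

variable {ι n R : Type*} [Fintype ι] [Fintype n]

theorem dotProduct_dotProduct_mulVec_self [CommSemiring R] (c : ι → R)
    (A : ι → Matrix n n R) (x : n → R) :
    c ⬝ᵥ (fun k => x ⬝ᵥ A k *ᵥ x) = x ⬝ᵥ (∑ k, c k • A k) *ᵥ x := by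
  simp only [sum_mulVec, smul_mulVec, dotProduct_sum, dotProduct_smul, smul_eq_mul]
  rfl

theorem Matrix.IsSymm.dotProduct_mulVec_smul_add_smul [CommRing R] {A : Matrix n n R}
    (hA : A.IsSymm) (a b : n → R) (s t : R) :
    (s • a + t • b) ⬝ᵥ A *ᵥ (s • a + t • b) =
      s ^ 2 * (a ⬝ᵥ A *ᵥ a) + t ^ 2 * (b ⬝ᵥ A *ᵥ b) + 2 * s * t * (a ⬝ᵥ A *ᵥ b) := by
  have hba : b ⬝ᵥ A *ᵥ a = a ⬝ᵥ A *ᵥ b := by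
    rw [dotProduct_mulVec, ← hA.eq, vecMul_transpose, dotProduct_comm, hA.eq]
  simp only [mulVec_add, mulVec_smul, dotProduct_add, add_dotProduct, dotProduct_smul,
    smul_dotProduct, smul_eq_mul, hba]
  ring

theorem setOf_forall_le_range_eq_image_ker {M : Matrix n n ℝ} (hM : M.PosSemidef)
    {V : Type*} (c : V → ℝ) (f : (n → ℝ) → V) (hcf : ∀ x, c (f x) = x ⬝ᵥ M *ᵥ x) :
    {y ∈ Set.range f | ∀ y' ∈ Set.range f, c y ≤ c y'} = f '' {x | M *ᵥ x = 0} := by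
  have hnonneg (x : n → ℝ) : 0 ≤ c (f x) := by simpa [hcf] using hM.dotProduct_mulVec_nonneg x
  have hzero_iff (x : n → ℝ) : c (f x) = 0 ↔ M *ᵥ x = 0 := by
    simpa [hcf] using hM.dotProduct_mulVec_zero_iff x
  ext y
  constructor
  · rintro ⟨⟨x, rfl⟩, hmin⟩
    have hf0 : c (f 0) = 0 := (hzero_iff 0).2 (mulVec_zero M)
    exact ⟨x, (hzero_iff x).1 (le_antisymm (hf0 ▸ hmin _ ⟨0, rfl⟩) (hnonneg x)), rfl⟩
  · rintro ⟨x, hx, rfl⟩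
    exact ⟨⟨x, rfl⟩, by rintro _ ⟨x', rfl⟩; exact (hzero_iff x).2 hx ▸ hnonneg x'⟩

end

theorem midpoint_ne_sq_smul_add_sq_smul_add_smul {K V : Type*} [Field K] [CharZero K]
    [AddCommGroup V] [Module K V] {u v w : V} (h : LinearIndependent K ![u, v, w]) (s t : K) :
    (1 / 2 : K) • u + (1 / 2 : K) • v ≠ s ^ 2 • u + t ^ 2 • v + (2 * s * t) • w := by
  intro heq
  have hcomb : ∑ i, ![s ^ 2 - 1 / 2, t ^ 2 - 1 / 2, 2 * s * t] i • ![u, v, w] i = 0 := by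
    simp only [Fin.sum_univ_three, cons_val_zero, cons_val_one, cons_val_two, tail_cons,
      head_cons]
    linear_combination (norm := module) -heq
  have hcoeff := Fintype.linearIndependent_iff.1 h _ hcomb
  have hs : s ^ 2 = 1 / 2 := sub_eq_zero.1 (hcoeff 0)
  have ht : t ^ 2 = 1 / 2 := sub_eq_zero.1 (hcoeff 1)
  have hst : 2 * s * t = 0 := hcoeff 2
  have : (2 * s * t) ^ 2 = 1 := by rw [mul_pow, mul_pow, hs, ht]; norm_num
  simp [hst] at this

theorem boundary_nonconvexity_sufficient_condition_homogeneous_general (n m : ℕ)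
    (A : Fin m → Matrix (Fin n) (Fin n) ℝ) (hA : ∀ k, (A k)ᵀ = A k)
    (f : (Fin n → ℝ) → (Fin m → ℝ))
    (hf : ∀ x k, f x k = x ⬝ᵥ (A k).mulVec x)
    (c : Fin m → ℝ)
    (hpsd : (∑ k, c k • A k).PosSemidef)
    (x₀ x₁ : Fin n → ℝ)
    (hker0 : (∑ k, c k • A k).mulVec x₀ = 0)
    (hker1 : (∑ k, c k • A k).mulVec x₁ = 0)
    (hker2 : ∀ x : Fin n → ℝ, (∑ k, c k • A k).mulVec x = 0 →
      ∃ t₀ t₁ : ℝ, x = t₀ • x₀ + t₁ • x₁)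
    (u v w : Fin m → ℝ)
    (hu : ∀ k, u k = x₀ ⬝ᵥ (A k).mulVec x₀)
    (hv : ∀ k, v k = x₁ ⬝ᵥ (A k).mulVec x₁)
    (hw : ∀ k, w k = x₀ ⬝ᵥ (A k).mulVec x₁)
    (hindep : LinearIndependent ℝ ![u, v, w]) :
    {y ∈ Set.range f | ∀ y' ∈ Set.range f, c ⬝ᵥ y ≤ c ⬝ᵥ y'} =
      f '' {x : Fin n → ℝ | (∑ k, c k • A k).mulVec x = 0} ∧
    ¬ Convex ℝ (f '' {x : Fin n → ℝ | (∑ k, c k • A k).mulVec x = 0}) := by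
  have hf_kernel (t₀ t₁ : ℝ) :
      f (t₀ • x₀ + t₁ • x₁) = t₀ ^ 2 • u + t₁ ^ 2 • v + (2 * t₀ * t₁) • w := by
    funext k
    simp [hf, IsSymm.dotProduct_mulVec_smul_add_smul (hA k), hu, hv, hw]
  refine ⟨setOf_forall_le_range_eq_image_ker hpsd (c ⬝ᵥ ·) f fun x => ?_, fun hconv => ?_⟩
  · rw [← dotProduct_dotProduct_mulVec_self, ← funext (hf x)]
  obtain ⟨x, hx, hmid⟩ := hconv ⟨x₀, hker0, funext fun k => (hf x₀ k).trans (hu k).symm⟩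
    ⟨x₁, hker1, funext fun k => (hf x₁ k).trans (hv k).symm⟩
    (by norm_num : (0 : ℝ) ≤ 1 / 2) (by norm_num : (0 : ℝ) ≤ 1 / 2) (by norm_num)
  obtain ⟨t₀, t₁, rfl⟩ := hker2 x hx
  exact midpoint_ne_sq_smul_add_sq_smul_add_smul hindep t₀ t₁ (hmid ▸ hf_kernel t₀ t₁)

theorem boundary_nonconvexity_sufficient_condition_homogeneous (n m : ℕ)
    (hm : 3 ≤ m) (hn : 2 ≤ n)
    (A : Fin m → Matrix (Fin n) (Fin n) ℝ) (hA : ∀ k, (A k)ᵀ = A k)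
    (f : (Fin n → ℝ) → (Fin m → ℝ))
    (hf : ∀ x k, f x k = x ⬝ᵥ (A k).mulVec x)
    (c : Fin m → ℝ)
    (hpsd : (∑ k, c k • A k).PosSemidef)
    (x₀ x₁ : Fin n → ℝ) (hindep01 : LinearIndependent ℝ ![x₀, x₁])
    (hker0 : (∑ k, c k • A k).mulVec x₀ = 0)
    (hker1 : (∑ k, c k • A k).mulVec x₁ = 0)
    (hker2 : ∀ x : Fin n → ℝ, (∑ k, c k • A k).mulVec x = 0 →
      ∃ t₀ t₁ : ℝ, x = t₀ • x₀ + t₁ • x₁)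
    (u v w : Fin m → ℝ)
    (hu : ∀ k, u k = x₀ ⬝ᵥ (A k).mulVec x₀)
    (hv : ∀ k, v k = x₁ ⬝ᵥ (A k).mulVec x₁)
    (hw : ∀ k, w k = x₀ ⬝ᵥ (A k).mulVec x₁)
    (hindep : LinearIndependent ℝ ![u, v, w]) :
    {y ∈ Set.range f | ∀ y' ∈ Set.range f, c ⬝ᵥ y ≤ c ⬝ᵥ y'} =
      f '' {x : Fin n → ℝ | (∑ k, c k • A k).mulVec x = 0} ∧
    ¬ Convex ℝ (f '' {x : Fin n → ℝ | (∑ k, c k • A k).mulVec x = 0}) :=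
  boundary_nonconvexity_sufficient_condition_homogeneous_general n m A hA f hf c hpsd x₀ x₁ hker0
    hker1 hker2 u v w hu hv hw hindep
end

section
/- (Non-convexity of a homogeneous quadratic surface.) If u, v, w : Fin m → ℝ are linearly independent over ℝ, then the set S := {(t₀^2) • u + (t₁^2) • v + (2*t₀*t₁) • w | t₀ t₁ : ℝ} is not convex: u ∈ S and v ∈ S, but (1/2) • u + (1/2) • v ∉ S. -/
theorem homogeneous_quadratic_surface_not_convex (m : ℕ) (u v w : Fin m → ℝ)
    (hindep : LinearIndependent ℝ ![u, v, w]) :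
    u ∈ {y : Fin m → ℝ | ∃ t₀ t₁ : ℝ, y = (t₀ ^ 2) • u + (t₁ ^ 2) • v + (2 * t₀ * t₁) • w} ∧
    v ∈ {y : Fin m → ℝ | ∃ t₀ t₁ : ℝ, y = (t₀ ^ 2) • u + (t₁ ^ 2) • v + (2 * t₀ * t₁) • w} ∧
    (1 / 2 : ℝ) • u + (1 / 2 : ℝ) • v ∉
      {y : Fin m → ℝ | ∃ t₀ t₁ : ℝ, y = (t₀ ^ 2) • u + (t₁ ^ 2) • v + (2 * t₀ * t₁) • w} ∧
    ¬ Convex ℝ {y : Fin m → ℝ | ∃ t₀ t₁ : ℝ, y = (t₀ ^ 2) • u + (t₁ ^ 2) • v + (2 * t₀ * t₁) • w} := by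
  have hu : u ∈ {y : Fin m → ℝ | ∃ t₀ t₁ : ℝ, y = (t₀ ^ 2) • u + (t₁ ^ 2) • v + (2 * t₀ * t₁) • w} := by
    exact ⟨1, 0, by simp⟩
  have hv : v ∈ {y : Fin m → ℝ | ∃ t₀ t₁ : ℝ, y = (t₀ ^ 2) • u + (t₁ ^ 2) • v + (2 * t₀ * t₁) • w} := by
    exact ⟨0, 1, by simp⟩
  have hmid : (1 / 2 : ℝ) • u + (1 / 2 : ℝ) • v ∉
      {y : Fin m → ℝ | ∃ t₀ t₁ : ℝ, y = (t₀ ^ 2) • u + (t₁ ^ 2) • v + (2 * t₀ * t₁) • w} := by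
    rintro ⟨t₀, t₁, h⟩
    rw [Fintype.linearIndependent_iff] at hindep
    have := hindep ![t₀ ^ 2 - 1 / 2, t₁ ^ 2 - 1 / 2, 2 * t₀ * t₁] (by
      simp [Fin.sum_univ_three]
      have h' : (t₀ ^ 2) • u + (t₁ ^ 2) • v + (2 * t₀ * t₁) • w
          - ((1 / 2 : ℝ) • u + (1 / 2 : ℝ) • v) = 0 := by rw [← h]; abel
      rw [← h']
      module)
    have h0 : t₀ ^ 2 - 1 / 2 = 0 := this 0
    have h1 : t₁ ^ 2 - 1 / 2 = 0 := this 1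
    have h2 : 2 * t₀ * t₁ = 0 := this 2
    simp at h0 h1 h2
    rcases h2 with h2 | h2 <;> subst h2 <;> [nlinarith; nlinarith]
  refine ⟨hu, hv, hmid, fun hconv => hmid ?_⟩
  have := hconv hu hv (by norm_num : (0:ℝ) ≤ 1/2) (by norm_num : (0:ℝ) ≤ 1/2) (by norm_num)
  exact this
end

section
/- (Convexity of the full image versus the image of the sphere for homogeneous maps.) Let n ≥ 1 and let f be a homogeneous quadratic map, f x k = x ⬝ᵥ (A k).mulVec x. Define the extended map g : (Fin n → ℝ) → (Fin m → ℝ) × ℝ by g x = (f x, ∑ i, (x i)^2). Then Set.range g is a convex set if and only if the image of the unit sphere H := f '' {x | ∑ i, (x i)^2 = 1} is a convex set. -/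
open Matrix Set

/-!
By homogeneity, `g (√t • z) = t • (f z, 1)` for every unit vector `z` and every `t ≥ 0`, and every
value of `g` is of this form (for `g 0` this needs some unit vector, hence `n ≥ 1`). So the range of `g` is the cone over `f '' S × {1}` (with `S` the unit
sphere), and a set is convex exactly when the cone over it, placed at height one, is convex.
-/

section Cone

variable {F : Type*} [AddCommGroup F] [Module ℝ F]

def coneOver (H : Set F) : Set (F × ℝ) :=
  image2 (fun t h => t • (h, (1 : ℝ))) (Ici (0 : ℝ)) H

theorem convex_coneOver_iff {H : Set F} : Convex ℝ (coneOver H) ↔ Convex ℝ H := by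
  constructor
  · intro hK x hx y hy a b ha hb hab
    obtain ⟨t, -, h, hh, heq⟩ :=
      hK ⟨1, mem_Ici.2 zero_le_one, x, hx, rfl⟩ ⟨1, mem_Ici.2 zero_le_one, y, hy, rfl⟩ ha hb hab
    have ht : t = 1 := by simpa [hab] using congrArg Prod.snd heq
    have hfst := congrArg Prod.fst heq
    simp only [ht, one_smul, Prod.smul_fst, Prod.fst_add] at hfst
    rwa [← hfst]
  · intro hH
    rintro _ ⟨s, hs, x, hx, rfl⟩ _ ⟨t, ht, y, hy, rfl⟩ a b ha hb hab
    have has : 0 ≤ a * s := mul_nonneg ha hs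
    have hbt : 0 ≤ b * t := mul_nonneg hb ht
    rcases (add_nonneg has hbt).eq_or_lt with hT | hT
    · -- both weights vanish: the combination is the apex `0`
      refine ⟨0, self_mem_Ici, x, hx, ?_⟩
      have hs0 : a * s = 0 := by linarith
      have ht0 : b * t = 0 := by linarith
      simp [smul_smul, hs0, ht0, Prod.zero_eq_mk]
    · refine ⟨a * s + b * t, hT.le, (a * s / (a * s + b * t)) • x + (b * t / (a * s + b * t)) • y,
        hH hx hy (by positivity) (by positivity) (by field_simp), ?_⟩
      ext
      · simp only [Prod.smul_fst, Prod.fst_add, smul_add, smul_smul]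
        congr 2 <;> field_simp
      · simp [mul_comm]

end Cone

section Homogeneous

variable {E F : Type*} [AddCommGroup E] [Module ℝ E] [AddCommGroup F] [Module ℝ F]
  {f : E → F} {q : E → ℝ}

theorem map_zero_of_homogeneous (hq : ∀ (c : ℝ) x, q (c • x) = c ^ 2 * q x) : q 0 = 0 := by
  simpa using hq 0 0

theorem exists_eq_sqrt_smul_of_homogeneous [Nontrivial E]
    (hq : ∀ (c : ℝ) x, q (c • x) = c ^ 2 * q x) (hq_pos : ∀ x, x ≠ 0 → 0 < q x) (x : E) :
    ∃ z, q z = 1 ∧ x = √(q x) • z := by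
  have normalize : ∀ y, y ≠ 0 → q ((√(q y))⁻¹ • y) = 1 := fun y hy => by
    rw [hq, inv_pow, Real.sq_sqrt (hq_pos y hy).le, inv_mul_cancel₀ (hq_pos y hy).ne']
  by_cases hx : x = 0
  · obtain ⟨e, he⟩ := exists_ne (0 : E)
    refine ⟨_, normalize e he, ?_⟩
    simp [hx, map_zero_of_homogeneous hq]
  · refine ⟨_, normalize x hx, ?_⟩
    rw [smul_smul, mul_inv_cancel₀ (Real.sqrt_pos.2 (hq_pos x hx)).ne', one_smul]

theorem range_prod_eq_coneOver [Nontrivial E] (hf : ∀ (c : ℝ) x, f (c • x) = c ^ 2 • f x)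
    (hq : ∀ (c : ℝ) x, q (c • x) = c ^ 2 * q x) (hq_pos : ∀ x, x ≠ 0 → 0 < q x) :
    range (fun x => (f x, q x)) = coneOver (f '' {x | q x = 1}) := by
  have scale : ∀ t, 0 ≤ t → ∀ z, q z = 1 → (f (√t • z), q (√t • z)) = t • (f z, 1) := by
    intro t ht z hz
    simp [hf, hq, hz, Real.sq_sqrt ht]
  apply Subset.antisymm
  · rintro _ ⟨x, rfl⟩
    obtain ⟨z, hz, hxz⟩ := exists_eq_sqrt_smul_of_homogeneous hq hq_pos x
    have hqx : 0 ≤ q x := by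
      rcases eq_or_ne x 0 with rfl | hx
      · exact (map_zero_of_homogeneous hq).ge
      · exact (hq_pos x hx).le
    refine ⟨q x, hqx, f z, ⟨z, hz, rfl⟩, ?_⟩
    simp only [← scale _ hqx z hz, ← hxz]
  · rintro _ ⟨t, ht, _, ⟨z, hz, rfl⟩, rfl⟩
    exact ⟨_, scale t ht z hz⟩

end Homogeneous

theorem smul_dotProduct_mulVec_smul {ι R : Type*} [Fintype ι] [CommRing R] (A : Matrix ι ι R)
    (c : R) (x : ι → R) : (c • x) ⬝ᵥ A *ᵥ (c • x) = c ^ 2 * (x ⬝ᵥ A *ᵥ x) := by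
  rw [mulVec_smul, smul_dotProduct, dotProduct_smul, smul_eq_mul, smul_eq_mul, ← mul_assoc, sq]

theorem full_image_convex_iff_sphere_image_convex_general (n m : ℕ) (hn : 1 ≤ n)
    (A : Fin m → Matrix (Fin n) (Fin n) ℝ)
    (f : (Fin n → ℝ) → (Fin m → ℝ))
    (hf : ∀ x k, f x k = x ⬝ᵥ (A k).mulVec x)
    (g : (Fin n → ℝ) → (Fin m → ℝ) × ℝ)
    (hg : ∀ x, g x = (f x, ∑ i, (x i) ^ 2)) :
    Convex ℝ (Set.range g) ↔ Convex ℝ (f '' {x : Fin n → ℝ | ∑ i, (x i) ^ 2 = 1}) := by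
  have : Nonempty (Fin n) := ⟨⟨0, hn⟩⟩
  have hf_smul (c : ℝ) (x : Fin n → ℝ) : f (c • x) = c ^ 2 • f x := by
    ext k
    simp only [hf, smul_dotProduct_mulVec_smul, Pi.smul_apply, smul_eq_mul]
  have hq_smul (c : ℝ) (x : Fin n → ℝ) : ∑ i, ((c • x) i) ^ 2 = c ^ 2 * ∑ i, (x i) ^ 2 := by
    simp only [Pi.smul_apply, smul_eq_mul, mul_pow, Finset.mul_sum]
  have hq_pos (x : Fin n → ℝ) (hx : x ≠ 0) : 0 < ∑ i, (x i) ^ 2 := by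
    obtain ⟨i, hi⟩ := Function.ne_iff.1 hx
    exact Finset.sum_pos' (fun j _ => sq_nonneg (x j))
      ⟨i, Finset.mem_univ i, by simpa [sq_pos_iff] using hi⟩
  rw [show g = fun x => (f x, ∑ i, (x i) ^ 2) from funext hg,
    range_prod_eq_coneOver hf_smul hq_smul hq_pos, convex_coneOver_iff]

theorem full_image_convex_iff_sphere_image_convex (n m : ℕ) (hn : 1 ≤ n)
    (A : Fin m → Matrix (Fin n) (Fin n) ℝ) (hA : ∀ k, (A k)ᵀ = A k)
    (f : (Fin n → ℝ) → (Fin m → ℝ))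
    (hf : ∀ x k, f x k = x ⬝ᵥ (A k).mulVec x)
    (g : (Fin n → ℝ) → (Fin m → ℝ) × ℝ)
    (hg : ∀ x, g x = (f x, ∑ i, (x i) ^ 2)) :
    Convex ℝ (Set.range g) ↔ Convex ℝ (f '' {x : Fin n → ℝ | ∑ i, (x i) ^ 2 = 1}) :=
  full_image_convex_iff_sphere_image_convex_general n m hn A f hf g hg
end

section
/- (Derivative of the pseudo-inverse of a smooth one-parameter matrix family.) Let Q : ℝ → Matrix (Fin n) (Fin n) ℝ, R : ℝ → Matrix (Fin n) (Fin n) ℝ and x₀ : ℝ → (Fin n → ℝ) be differentiable, and suppose for every t: (Q t)ᵀ = Q t, (R t)ᵀ = R t, (Q t).mulVec (x₀ t) = 0, (R t).mulVec (x₀ t) = 0, (R t) * (Q t) = 1 - Matrix.vecMulVec (x₀ t) (x₀ t), (Q t) * (R t) = 1 - Matrix.vecMulVec (x₀ t) (x₀ t), and x₀ t ⬝ᵥ x₀ t = 1. Then for every t, writing Q̇ := deriv Q t, x := x₀ t, R' := R t: deriv R t = -(R' * Q̇ * R') + Matrix.vecMulVec x ((R' * R').mulVec (Q̇.mulVec x))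 + Matrix.vecMulVec ((R' * R').mulVec (Q̇.mulVec x)) x. -/
/-!
Write `P = x xᵀ`. Differentiating `R Q = 1 - P`, `Q x = 0` and `R x = 0` gives
`Ṙ Q + R Q̇ = -Ṗ`, `Q̇ x + Q ẋ = 0` and `Ṙ x + R ẋ = 0`. Multiplying the first on the right by `R`
and using `Q R = 1 - P` expresses `Ṙ` through `Ṙ x`, `Ṗ R` and `R Q̇ R`; the remaining two
identities, together with `R Q = 1 - P` and `R x = 0`, give `R ẋ = -R² Q̇ x`, which evaluates both
`Ṙ x` and `Ṗ R`.
-/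

open Matrix

attribute [local instance] Matrix.normedAddCommGroup Matrix.normedSpace

section Calculus

variable {𝕜 : Type*} [NontriviallyNormedField 𝕜] [CompleteSpace 𝕜]
  {E F G : Type*} [NormedAddCommGroup E] [NormedSpace 𝕜 E] [FiniteDimensional 𝕜 E]
  [NormedAddCommGroup F] [NormedSpace 𝕜 F] [FiniteDimensional 𝕜 F]
  [NormedAddCommGroup G] [NormedSpace 𝕜 G]
  {t : 𝕜}

theorem LinearMap.hasDerivAt_apply₂ (B : E →ₗ[𝕜] F →ₗ[𝕜] G) {u : 𝕜 → E} {v : 𝕜 → F}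
    {u' : E} {v' : F} (hu : HasDerivAt u u' t) (hv : HasDerivAt v v' t) :
    HasDerivAt (fun s ↦ B (u s) (v s)) (B u' (v t) + B (u t) v') t := by
  simpa [add_comm] using
    B.toContinuousBilinearMap.hasDerivAt_of_bilinear (fun _ ↦ hu) (fun _ ↦ hv)

variable {m : Type*} [Fintype m] {A B : 𝕜 → Matrix m m 𝕜} {A' B' : Matrix m m 𝕜}
  {u v : 𝕜 → m → 𝕜} {u' v' : m → 𝕜}

theorem HasDerivAt.matrix_mul (hA : HasDerivAt A A' t) (hB : HasDerivAt B B' t) :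
    HasDerivAt (fun s ↦ A s * B s) (A' * B t + A t * B') t :=
  (LinearMap.mul 𝕜 _).hasDerivAt_apply₂ hA hB

theorem HasDerivAt.matrix_mulVec (hA : HasDerivAt A A' t) (hv : HasDerivAt v v' t) :
    HasDerivAt (fun s ↦ A s *ᵥ v s) (A' *ᵥ v t + A t *ᵥ v') t :=
  (mulVecBilin 𝕜 𝕜).hasDerivAt_apply₂ hA hv

theorem HasDerivAt.vecMulVec (hu : HasDerivAt u u' t) (hv : HasDerivAt v v' t) :
    HasDerivAt (fun s ↦ vecMulVec (u s) (v s)) (vecMulVec u' (v t) + vecMulVec (u t) v') t :=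
  (vecMulVecBilin 𝕜 𝕜).hasDerivAt_apply₂ hu hv

end Calculus

/- `Q'`, `R'`, `x'` play the role of the derivatives of `Q`, `R`, `x`; the hypotheses on them are
the differentiated identities. -/
section Linearized

variable {α m : Type*} [CommRing α] [Fintype m] [DecidableEq m]
  {Q R Q' R' : Matrix m m α} {x x' : m → α}

theorem pseudoInverse_mulVec_tangent_eq (hRx : R *ᵥ x = 0) (hRQ : R * Q = 1 - vecMulVec x x)
    (hQx' : Q' *ᵥ x + Q *ᵥ x' = 0) :
    R *ᵥ x' = -((R * R) *ᵥ (Q' *ᵥ x)) := by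
  have hQx : Q *ᵥ x' = -(Q' *ᵥ x) := eq_neg_of_add_eq_zero_right hQx'
  calc R *ᵥ x' = R *ᵥ ((R * Q + vecMulVec x x) *ᵥ x') := by
        rw [hRQ, sub_add_cancel, one_mulVec]
    _ = R *ᵥ (R *ᵥ (Q *ᵥ x')) + (x ⬝ᵥ x') • (R *ᵥ x) := by
        rw [add_mulVec, mulVec_add, vecMulVec_mulVec, op_smul_eq_smul, mulVec_smul,
          ← mulVec_mulVec]
    _ = -((R * R) *ᵥ (Q' *ᵥ x)) := by
        rw [hQx, hRx, smul_zero, add_zero, mulVec_neg, mulVec_neg, ← mulVec_mulVec]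

theorem pseudoInverse_tangent_eq (hRsymm : Rᵀ = R) (hRx : R *ᵥ x = 0)
    (hRQ : R * Q = 1 - vecMulVec x x) (hQR : Q * R = 1 - vecMulVec x x)
    (hRQ' : R' * Q + R * Q' = -(vecMulVec x' x + vecMulVec x x'))
    (hQx' : Q' *ᵥ x + Q *ᵥ x' = 0) (hRx' : R' *ᵥ x + R *ᵥ x' = 0) :
    R' = -(R * Q' * R) + vecMulVec x ((R * R) *ᵥ (Q' *ᵥ x))
      + vecMulVec ((R * R) *ᵥ (Q' *ᵥ x)) x := by
  have hRx'' := pseudoInverse_mulVec_tangent_eq hRx hRQ hQx'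
  have hvecMul (y : m → α) : y ᵥ* R = R *ᵥ y := by rw [← vecMul_transpose, hRsymm]
  have hR'x : R' *ᵥ x = (R * R) *ᵥ (Q' *ᵥ x) := by
    rw [eq_neg_of_add_eq_zero_left hRx', hRx'', neg_neg]
  calc R' = R' * (Q * R + vecMulVec x x) := by rw [hQR, sub_add_cancel, mul_one]
    _ = (R' * Q + R * Q') * R - R * Q' * R + vecMulVec (R' *ᵥ x) x := by
        rw [mul_add, mul_vecMulVec]; noncomm_ring
    _ = _ := by
        rw [hRQ', neg_mul, add_mul, vecMulVec_mul, vecMulVec_mul, hvecMul, hvecMul, hRx, hRx'',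
          hR'x, vecMulVec_zero, vecMulVec_neg]
        abel

end Linearized

theorem deriv_pseudo_inverse_general (n : ℕ)
    (Q R : ℝ → Matrix (Fin n) (Fin n) ℝ) (x₀ : ℝ → (Fin n → ℝ))
    (hQ : Differentiable ℝ Q) (hR : Differentiable ℝ R) (hx : Differentiable ℝ x₀)
    (hRsymm : ∀ t, (R t)ᵀ = R t)
    (hker : ∀ t, (Q t).mulVec (x₀ t) = 0)
    (hkerR : ∀ t, (R t).mulVec (x₀ t) = 0)
    (hRQ : ∀ t, R t * Q t = 1 - Matrix.vecMulVec (x₀ t) (x₀ t))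
    (hQR : ∀ t, Q t * R t = 1 - Matrix.vecMulVec (x₀ t) (x₀ t)) :
    ∀ t : ℝ,
      deriv R t =
        -(R t * deriv Q t * R t) +
          Matrix.vecMulVec (x₀ t) ((R t * R t).mulVec ((deriv Q t).mulVec (x₀ t))) +
          Matrix.vecMulVec ((R t * R t).mulVec ((deriv Q t).mulVec (x₀ t))) (x₀ t) := by
  intro t
  have hQt := (hQ t).hasDerivAt
  have hRt := (hR t).hasDerivAt
  have hxt := (hx t).hasDerivAt
  have hdRQ := hRt.matrix_mul hQt
  have hdQx := hQt.matrix_mulVec hxt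
  have hdRx := hRt.matrix_mulVec hxt
  simp only [hRQ, hker, hkerR] at hdRQ hdQx hdRx
  exact pseudoInverse_tangent_eq (hRsymm t) (hkerR t) (hRQ t) (hQR t)
    ((hdRQ.unique ((hasDerivAt_const t 1).sub (hxt.vecMulVec hxt))).trans (zero_sub _))
    (hdQx.unique (hasDerivAt_const t 0)) (hdRx.unique (hasDerivAt_const t 0))

theorem deriv_pseudo_inverse (n : ℕ)
    (Q R : ℝ → Matrix (Fin n) (Fin n) ℝ) (x₀ : ℝ → (Fin n → ℝ))
    (hQ : Differentiable ℝ Q) (hR : Differentiable ℝ R) (hx : Differentiable ℝ x₀)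
    (hQsymm : ∀ t, (Q t)ᵀ = Q t) (hRsymm : ∀ t, (R t)ᵀ = R t)
    (hker : ∀ t, (Q t).mulVec (x₀ t) = 0)
    (hkerR : ∀ t, (R t).mulVec (x₀ t) = 0)
    (hRQ : ∀ t, R t * Q t = 1 - Matrix.vecMulVec (x₀ t) (x₀ t))
    (hQR : ∀ t, Q t * R t = 1 - Matrix.vecMulVec (x₀ t) (x₀ t))
    (hnorm : ∀ t, x₀ t ⬝ᵥ x₀ t = 1) :
    ∀ t : ℝ,
      deriv R t =
        -(R t * deriv Q t * R t) +
          Matrix.vecMulVec (x₀ t) ((R t * R t).mulVec ((deriv Q t).mulVec (x₀ t))) +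
          Matrix.vecMulVec ((R t * R t).mulVec ((deriv Q t).mulVec (x₀ t))) (x₀ t) :=
  deriv_pseudo_inverse_general n Q R x₀ hQ hR hx hRsymm hker hkerR hRQ hQR
end
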